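/- arXiv:1710.08773 — 3 statements merged into one kernel-verified Lean document; each statement's English description precedes it below -/
import Mathlib

section
/- Let M be a 4×4 matrix over ℝ, let I1 = tr(M), and let T = M - (I1/4)·Id be its trace-free part. Then the characteristic polynomial of T equals X^4 + w2·X^2 + w3·X + w4, where, writing p2 = tr(M^2), p3 = tr(M^3), p4 = tr(M^4): w2 = -(1/2)·p2 + (1/8)·I1^2, w3 = -(1/3)·p3 + (1/4)·I1·p2 - (1/24)·I1^3, and w4 = (1/8)·p2^2 - (5/32)·I1^2·p2 + (5/256)·I1^4 - (1/4)·p4 + (1/4)·I1·p3. -/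
/-!
Newton's identities express the coefficients of the characteristic polynomial of a 4×4 matrix `T`
through the power traces `tr (T ^ k)`, `k ≤ 4`. For `T = M - c • 1` the binomial theorem writes
each `tr (T ^ k)` as a combination of the `tr (M ^ i)`, and `c = tr M / 4` makes `tr T = 0`,
which removes the cubic term.
-/

open Matrix Polynomial Finset

namespace Matrix

theorem trace_pow_sub_smul_one {n R : Type*} [Fintype n] [DecidableEq n] [CommRing R]
    (M : Matrix n n R) (c : R) (k : ℕ) :
    ((M - c • 1) ^ k).trace =
      ∑ i ∈ range (k + 1), (-c) ^ (k - i) * k.choose i * (M ^ i).trace := by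
  rw [sub_eq_add_neg, ← neg_smul, ((Commute.one_right M).smul_right (-c)).add_pow, trace_sum]
  refine sum_congr rfl fun i _ => ?_
  rw [_root_.smul_pow, one_pow, mul_smul_comm, mul_one, ← nsmul_eq_mul', trace_smul, trace_smul,
    nsmul_eq_mul, smul_eq_mul]
  ring

theorem charpoly_fin_four {K : Type*} [Field K] [CharZero K] (M : Matrix (Fin 4) (Fin 4) K) :
    M.charpoly = X ^ 4 - C M.trace * X ^ 3 + C ((M.trace ^ 2 - (M ^ 2).trace) / 2) * X ^ 2
      - C ((M.trace ^ 3 - 3 * M.trace * (M ^ 2).trace + 2 * (M ^ 3).trace) / 6) * X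
      + C ((M.trace ^ 4 - 6 * M.trace ^ 2 * (M ^ 2).trace + 3 * (M ^ 2).trace ^ 2
          + 8 * M.trace * (M ^ 3).trace - 6 * (M ^ 4).trace) / 24) := by
  refine Polynomial.funext fun x => ?_
  rw [eval_charpoly, det_succ_row_zero]
  simp only [eval_add, eval_sub, eval_mul, eval_C, eval_X, det_fin_three, Fin.sum_univ_four, trace,
    Matrix.diag, pow_succ, pow_zero, one_mul, mul_apply, Matrix.sub_apply, scalar_apply,
    diagonal_apply, submatrix_apply, Fin.succAbove, Fin.lt_def, Fin.isValue, Fin.coe_ofNat_eq_mod,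
    Nat.reduceMod, Fin.reduceSucc, Fin.reduceCastSucc, Fin.reduceEq, ↓reduceIte, lt_self_iff_false,
    not_lt_zero, Nat.not_ofNat_lt_one, Nat.ofNat_pos, Nat.one_lt_ofNat, Nat.lt_add_one,
    Nat.zero_mod, Nat.one_mod, Nat.mod_succ]
  ring

end Matrix

/-- the characteristic polynomial of the trace-free part
`T = M - (tr M / 4)·Id` of a 4×4 real matrix `M` is `X^4 + w2·X^2 + w3·X + w4`, where the
`wᵢ` are given in terms of `I1 = tr M` and `pₖ = tr(M^k)`. -/
theorem charpoly_traceFreePart_fin4 (M : Matrix (Fin 4) (Fin 4) ℝ) :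
    (M - (M.trace / 4) • (1 : Matrix (Fin 4) (Fin 4) ℝ)).charpoly =
      X ^ 4
        + C (-(1/2) * (M ^ 2).trace + (1/8) * M.trace ^ 2) * X ^ 2
        + C (-(1/3) * (M ^ 3).trace + (1/4) * M.trace * (M ^ 2).trace
              - (1/24) * M.trace ^ 3) * X
        + C ((1/8) * ((M ^ 2).trace) ^ 2 - (5/32) * M.trace ^ 2 * (M ^ 2).trace
              + (5/256) * M.trace ^ 4 - (1/4) * (M ^ 4).trace
              + (1/4) * M.trace * (M ^ 3).trace) := by
  have htr : (M - (M.trace / 4) • 1).trace = 0 := by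
    rw [trace_sub, trace_smul, trace_one, Fintype.card_fin, smul_eq_mul]
    ring
  rw [charpoly_fin_four, htr, trace_pow_sub_smul_one, trace_pow_sub_smul_one,
    trace_pow_sub_smul_one]
  refine Polynomial.funext fun x => ?_
  simp only [eval_add, eval_sub, eval_mul, eval_pow, eval_C, eval_X, sum_range_succ, sum_range_zero,
    pow_zero, pow_one, trace_one, Fintype.card_fin, Nat.choose, Nat.cast_ofNat, Nat.cast_one,
    Nat.reduceAdd, Nat.reduceSub]
  ring
end

section
/- Let Q be a 3×3 complex matrix with trace zero, and for each positive integer k set W_k = Re(tr(Q^k)). Then (W_2^2 - 2·W_4)·(W_2^2 + W_4)^2 + 18·W_3^2·(6·W_6 - 2·W_3^2 - 9·W_2·W_4 + 3·W_2^3) = (1/4)·Im((tr(Q^2))^3 - 6·(tr(Q^3))^2)·Im((tr(Q^2))^3 + 6·(tr(Q^3))^2). -/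
/-!
A trace-free `3 × 3` matrix satisfies the Cayley–Hamilton relation `2 Q³ = tr(Q²) Q + 2 det Q`,
so the power sums `pₖ = tr(Qᵏ)` obey the Newton recurrence `2 pₖ₊₃ = p₂ pₖ₊₁ + 2 det Q · pₖ`.
Together with `p₁ = 0` it gives `2 p₄ = p₂²` and `12 p₆ = 3 p₂³ + 4 p₃²`. Substituting these into
the left-hand side leaves a polynomial identity in the real and imaginary parts of `p₂` and `p₃`.
-/

open Matrix

section TraceFree

variable {R : Type*} [CommRing R] {Q : Matrix (Fin 3) (Fin 3) R}

theorem two_smul_pow_three_of_trace_eq_zero (hQ : Q.trace = 0) :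
    (2 : R) • Q ^ 3 = (Q ^ 2).trace • Q + (2 * Q.det) • (1 : Matrix (Fin 3) (Fin 3) R) := by
  rw [trace_fin_three] at hQ
  have h22 : Q 2 2 = -Q 0 0 - Q 1 1 := by linear_combination hQ
  rw [trace_fin_three]
  ext i j
  fin_cases i <;> fin_cases j <;>
    simp only [pow_succ, pow_zero, one_mul, Fin.mk_one, Fin.isValue, Fin.zero_eta, Fin.reduceFinMk,
      Matrix.smul_apply, mul_apply, Fin.sum_univ_three, h22, smul_eq_mul, det_fin_three,
      Matrix.add_apply, ne_eq, Fin.reduceEq, not_false_eq_true, one_apply_ne, one_apply_eq,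
      mul_zero, mul_one, add_zero] <;>
    ring

theorem two_mul_trace_pow_add_three (hQ : Q.trace = 0) (k : ℕ) :
    2 * (Q ^ (k + 3)).trace =
      (Q ^ 2).trace * (Q ^ (k + 1)).trace + 2 * Q.det * (Q ^ k).trace := by
  have h := congrArg (fun M => (Q ^ k * M).trace) (two_smul_pow_three_of_trace_eq_zero hQ)
  simpa [mul_add, ← pow_add, ← pow_succ] using h

theorem two_mul_trace_pow_four (hQ : Q.trace = 0) :
    2 * (Q ^ 4).trace = (Q ^ 2).trace ^ 2 := by
  simpa [hQ, sq] using two_mul_trace_pow_add_three hQ 1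

theorem twelve_mul_trace_pow_six (hQ : Q.trace = 0) :
    12 * (Q ^ 6).trace = 3 * (Q ^ 2).trace ^ 3 + 4 * (Q ^ 3).trace ^ 2 := by
  have h3 : 2 * (Q ^ 3).trace = 2 * Q.det * 3 := by
    simpa [hQ] using two_mul_trace_pow_add_three hQ 0
  linear_combination 6 * two_mul_trace_pow_add_three hQ 3
    + 3 * (Q ^ 2).trace * two_mul_trace_pow_four hQ - 2 * (Q ^ 3).trace * h3

end TraceFree

theorem re_identity_of_power_sums (p₂ p₃ p₄ p₆ : ℂ) (h₄ : 2 * p₄ = p₂ ^ 2)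
    (h₆ : 12 * p₆ = 3 * p₂ ^ 3 + 4 * p₃ ^ 2) :
    (p₂.re ^ 2 - 2 * p₄.re) * (p₂.re ^ 2 + p₄.re) ^ 2
        + 18 * p₃.re ^ 2 * (6 * p₆.re - 2 * p₃.re ^ 2 - 9 * p₂.re * p₄.re + 3 * p₂.re ^ 3) =
      (1/4) * (p₂ ^ 3 - 6 * p₃ ^ 2).im * (p₂ ^ 3 + 6 * p₃ ^ 2).im := by
  obtain rfl : p₄ = p₂ ^ 2 / 2 := by linear_combination h₄ / 2
  obtain rfl : p₆ = (3 * p₂ ^ 3 + 4 * p₃ ^ 2) / 12 := by linear_combination h₆ / 12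
  simp only [pow_succ, pow_zero, one_mul, Complex.mul_re, Complex.mul_im, Complex.add_re,
    Complex.add_im, Complex.sub_im, Complex.div_ofNat_re, Complex.re_ofNat, Complex.im_ofNat]
  ring

/-- for a trace-free 3×3 complex matrix `Q`, with `W_k = Re(tr(Q^k))`,
`(W₂² - 2W₄)(W₂² + W₄)² + 18W₃²(6W₆ - 2W₃² - 9W₂W₄ + 3W₂³)
  = (1/4)·Im((tr Q²)³ - 6(tr Q³)²)·Im((tr Q²)³ + 6(tr Q³)²)`. -/
theorem fin3_W2_identity (Q : Matrix (Fin 3) (Fin 3) ℂ) (hQ : Q.trace = 0) :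
    ((((Q ^ 2).trace).re ^ 2 - 2 * ((Q ^ 4).trace).re)
          * ((((Q ^ 2).trace).re ^ 2 + ((Q ^ 4).trace).re) ^ 2)
        + 18 * (((Q ^ 3).trace).re) ^ 2
          * (6 * ((Q ^ 6).trace).re - 2 * (((Q ^ 3).trace).re) ^ 2
              - 9 * ((Q ^ 2).trace).re * ((Q ^ 4).trace).re
              + 3 * (((Q ^ 2).trace).re) ^ 3)) =
      (1/4) * (((Q ^ 2).trace) ^ 3 - 6 * ((Q ^ 3).trace) ^ 2).im
        * (((Q ^ 2).trace) ^ 3 + 6 * ((Q ^ 3).trace) ^ 2).im :=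
  re_identity_of_power_sums _ _ _ _ (two_mul_trace_pow_four hQ) (twelve_mul_trace_pow_six hQ)
end

section
/- Let Q be a 3×3 complex matrix with trace zero whose characteristic polynomial has a repeated root in ℂ (i.e., Q has an eigenvalue of algebraic multiplicity at least 2), and for each positive integer k set W_k = Re(tr(Q^k)). Then both invariants vanish: -11·W_2^3 + 33·W_2·W_4 - 18·W_6 = 0 and (W_2^2 - 2·W_4)·(W_2^2 + W_4)^2 + 18·W_3^2·(6·W_6 - 2·W_3^2 - 9·W_2·W_4 + 3·W_2^3) = 0. -/
/-!
The trace is the sum of the eigenvalues, so a repeated eigenvalue `z` of a trace-free `3 × 3`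
matrix forces the spectrum `{z, z, -2z}` and the characteristic polynomial `X³ - 3z²X + 2z³`.
Newton's identity for its linear coefficient gives `tr Q² = 6z²`, and Cayley–Hamilton turns the
characteristic polynomial into a linear recursion for `tr Qᵏ`, whence `tr Qᵏ = 2zᵏ + (-2z)ᵏ`.
Both invariants then become polynomial identities in `Re z` and `Im z`.
-/

open Matrix Polynomial

namespace Matrix

variable {R : Type*} [CommRing R]

lemma two_mul_charpoly_coeff_one_fin_three (M : Matrix (Fin 3) (Fin 3) R) :
    2 * M.charpoly.coeff 1 = M.trace ^ 2 - (M ^ 2).trace := by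
  simp only [charpoly, det_fin_three, charmatrix_apply, trace_fin_three, sq, mul_apply,
    Fin.sum_univ_three]
  simp [coeff_mul, coeff_X, coeff_C, Finset.Nat.antidiagonal_succ]
  ring

lemma charpoly_eq_of_trace_eq_zero_of_two_le_rootMultiplicity {K : Type*} [Field K]
    [IsAlgClosed K] {Q : Matrix (Fin 3) (Fin 3) K} (hQ : Q.trace = 0) {z : K}
    (hz : 2 ≤ Q.charpoly.rootMultiplicity z) :
    Q.charpoly = X ^ 3 - C (3 * z ^ 2) * X + C (2 * z ^ 3) := by
  classical
  have hcard : Multiset.card Q.charpoly.roots = Q.charpoly.natDegree :=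
    IsAlgClosed.card_roots_eq_natDegree
  obtain ⟨s, hs⟩ := Multiset.le_iff_exists_add.mp
    (Multiset.le_count_iff_replicate_le.mp (hz.trans_eq (count_roots _).symm))
  obtain ⟨w, rfl⟩ : ∃ w, s = {w} := by
    rw [← Multiset.card_eq_one]
    simpa [hs] using hcard
  have hw : w = -2 * z := by
    have h := Q.trace_eq_sum_roots_charpoly
    rw [hQ, hs, Multiset.sum_add, Multiset.sum_replicate, Multiset.sum_singleton, nsmul_eq_mul,
      Nat.cast_ofNat] at h
    linear_combination -h
  rw [← prod_multiset_X_sub_C_of_monic_of_roots_card_eq Q.charpoly_monic hcard, hs, hw,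
    Multiset.map_add, Multiset.prod_add, Multiset.map_replicate, Multiset.prod_replicate,
    Multiset.map_singleton, Multiset.prod_singleton]
  simp only [map_neg, map_mul, map_pow, map_ofNat]
  ring

lemma pow_add_three_of_charpoly_eq {n : Type*} [Fintype n] [DecidableEq n] {Q : Matrix n n R}
    {z : R} (hQ : Q.charpoly = X ^ 3 - C (3 * z ^ 2) * X + C (2 * z ^ 3)) (k : ℕ) :
    Q ^ (k + 3) = (3 * z ^ 2) • Q ^ (k + 1) - (2 * z ^ 3) • Q ^ k := by
  have h := Q.aeval_self_charpoly
  simp only [hQ, map_add, map_sub, aeval_mul, aeval_X_pow, aeval_X, aeval_C,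
    Algebra.algebraMap_eq_smul_one, smul_one_mul] at h
  have hQ3 : Q ^ 3 = (3 * z ^ 2) • Q - (2 * z ^ 3) • 1 := by
    linear_combination (norm := module) h
  rw [pow_add, hQ3, mul_sub, mul_smul_comm, mul_smul_comm, mul_one, ← pow_succ]

lemma trace_pow_of_charpoly_eq {Q : Matrix (Fin 3) (Fin 3) R} {z : R}
    (hQ : Q.charpoly = X ^ 3 - C (3 * z ^ 2) * X + C (2 * z ^ 3)) :
    ∀ k, (Q ^ k).trace = 2 * z ^ k + (-2 * z) ^ k
  | 0 => by norm_num [trace_one]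
  | 1 => by simp [trace_eq_neg_charpoly_coeff, hQ, -map_pow]
  | 2 => by
    have hc1 : Q.charpoly.coeff 1 = -(3 * z ^ 2) := by simp [hQ, -map_pow]
    have htr : Q.trace = 0 := by simp [trace_eq_neg_charpoly_coeff, hQ, -map_pow]
    linear_combination Q.two_mul_charpoly_coeff_one_fin_three - 2 * hc1 + Q.trace * htr
  | k + 3 => by
    rw [pow_add_three_of_charpoly_eq hQ, trace_sub, trace_smul, trace_smul,
      trace_pow_of_charpoly_eq hQ (k + 1), trace_pow_of_charpoly_eq hQ k, smul_eq_mul,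
      smul_eq_mul]
    ring

end Matrix

/-- if a trace-free 3×3 complex matrix has an eigenvalue of algebraic
multiplicity at least 2, then both real invariants 𝒲₁ and 𝒲₂ vanish, where
`W_k = Re(tr(Q^k))`. -/
theorem fin3_repeated_eigenvalue_invariants_vanish (Q : Matrix (Fin 3) (Fin 3) ℂ)
    (hQ : Q.trace = 0) (hrep : ∃ z : ℂ, 2 ≤ Q.charpoly.rootMultiplicity z) :
    (-11 * (((Q ^ 2).trace).re) ^ 3
        + 33 * ((Q ^ 2).trace).re * ((Q ^ 4).trace).re
        - 18 * ((Q ^ 6).trace).re = 0) ∧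
      ((((Q ^ 2).trace).re ^ 2 - 2 * ((Q ^ 4).trace).re)
            * ((((Q ^ 2).trace).re ^ 2 + ((Q ^ 4).trace).re) ^ 2)
          + 18 * (((Q ^ 3).trace).re) ^ 2
            * (6 * ((Q ^ 6).trace).re - 2 * (((Q ^ 3).trace).re) ^ 2
                - 9 * ((Q ^ 2).trace).re * ((Q ^ 4).trace).re
                + 3 * (((Q ^ 2).trace).re) ^ 3) = 0) := by
  obtain ⟨z, hz⟩ := hrep
  have htr := trace_pow_of_charpoly_eq
    (charpoly_eq_of_trace_eq_zero_of_two_le_rootMultiplicity hQ hz)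
  rw [htr 2, htr 3, htr 4, htr 6]
  simp only [pow_succ, pow_zero, one_mul, Complex.add_re, Complex.mul_re, Complex.mul_im,
    Complex.neg_re, Complex.neg_im, Complex.re_ofNat, Complex.im_ofNat]
  constructor <;> ring
end
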